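/- arXiv:0807.2626 — 2 statements merged into one kernel-verified Lean document; each statement's English description precedes it below -/
import Mathlib

section
/- For every integer k ≥ 1, every complex s with Re(s) > 1, and every complex α with |α| < k, the series ∑_{n≥k} (n+α)^{-s} equals ζ_k(s) + ∑_{n≥1} ((-1)^n/n!) · s(s+1)⋯(s+n-1) · ζ_k(s+n) · α^n, where ζ_k(s) = ∑_{n≥k} n^{-s}. -/
/-!
Since `|α| < k ≤ n + k`, each term has the binomial expansion
`(n + k + α)^{-s} = ∑_j (-s choose j) α^j (n + k)^{-s-j}`. The double series is dominated by
`(n + k)^{-Re s} · |(-s choose j)| (|α|/k)^j`, which is summable because `Re s > 1` and the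
binomial series has radius of convergence `≥ 1`. Exchanging the order of summation, the sum over
`n` of the `j`-th column is `(-s choose j) α^j ζ_k(s + j)`, and
`(-s choose j) = (-1)^j s(s+1)⋯(s+j-1) / j!`.
-/

open Complex Finset

/-- `ζ_k(s) = ∑_{n≥k} n^{-s}` for `Re s > 1`. -/
noncomputable def zetaShift (k : ℕ) (s : ℂ) : ℂ := ∑' n : ℕ, ((n : ℂ) + k) ^ (-s)

theorem Ring.choose_neg_eq_prod {K : Type*} [Field K] [CharZero K] (r : K) (n : ℕ) :
    Ring.choose (-r) n = (-1) ^ n / n.factorial * ∏ i ∈ range n, (r + i) := by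
  rw [Ring.choose_eq_smul, ← Polynomial.aeval_eq_smeval, Polynomial.aeval_def,
    Polynomial.eval₂_eq_eval_map, descPochhammer_map, descPochhammer_eval_eq_prod_range,
    smul_eq_mul, div_eq_inv_mul, mul_assoc, ← card_range n, ← prod_const, card_range,
    ← prod_mul_distrib]
  congr 2 with i
  ring

theorem Real.summable_natCast_add_rpow {c : ℝ} (hc : 0 ≤ c) {p : ℝ} (hp : p < -1) :
    Summable fun n : ℕ => ((n : ℝ) + c) ^ p := by
  refine ((Real.summable_one_div_nat_add_rpow c (-p)).mpr (by linarith)).congr fun n => ?_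
  have hn : 0 ≤ (n : ℝ) + c := by positivity
  rw [abs_of_nonneg hn, Real.rpow_neg hn, one_div, inv_inv]

namespace Complex

theorem hasSum_choose_mul_pow (a : ℂ) {z : ℂ} (hz : ‖z‖ < 1) :
    HasSum (fun n : ℕ => Ring.choose a n * z ^ n) ((1 + z) ^ a) := by
  have hz' : z ∈ Metric.eball (0 : ℂ) 1 := by
    rw [mem_eball_zero_iff, ← ofReal_norm, ← ENNReal.ofReal_one]
    exact (ENNReal.ofReal_lt_ofReal_iff_of_nonneg (norm_nonneg z)).mpr hz
  simpa [binomialSeries, mul_comm] using one_add_cpow_hasFPowerSeriesOnBall_zero.hasSum hz'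

theorem summable_norm_choose_mul_pow (a : ℂ) {r : ℝ} (hr₀ : 0 ≤ r) (hr : r < 1) :
    Summable fun n : ℕ => ‖Ring.choose a n‖ * r ^ n := by
  lift r to NNReal using hr₀
  have hr' : (r : ENNReal) < (binomialSeries ℂ a).radius :=
    lt_of_lt_of_le (by exact_mod_cast hr) binomialSeries_radius_ge_one
  simpa [binomialSeries, FormalMultilinearSeries.ofScalars_norm] using
    (binomialSeries ℂ a).summable_norm_mul_pow hr'

theorem ofReal_mul_cpow {r : ℝ} (hr : 0 < r) (x t : ℂ) :
    ((r : ℂ) * x) ^ t = (r : ℂ) ^ t * x ^ t := by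
  rcases eq_or_ne x 0 with rfl | hx
  · rcases eq_or_ne t 0 with rfl | ht <;> simp [zero_cpow, *]
  have hr' : (r : ℂ) ≠ 0 := ofReal_ne_zero.mpr hr.ne'
  rw [cpow_def_of_ne_zero (mul_ne_zero hr' hx), cpow_def_of_ne_zero hr', cpow_def_of_ne_zero hx,
    log_ofReal_mul hr hx, add_mul, exp_add, ofReal_log hr.le]

theorem pow_mul_cpow_sub_natCast {x : ℂ} (hx : x ≠ 0) (α a : ℂ) (j : ℕ) :
    α ^ j * x ^ (a - j) = x ^ a * (α / x) ^ j := by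
  rw [cpow_sub _ _ hx, cpow_natCast, div_pow]
  ring

theorem hasSum_choose_mul_pow_mul_cpow_sub {x : ℝ} {α : ℂ} (hα : ‖α‖ < x) (a : ℂ) :
    HasSum (fun j : ℕ => Ring.choose a j * α ^ j * (x : ℂ) ^ (a - j)) ((x + α) ^ a) := by
  have hx : 0 < x := (norm_nonneg α).trans_lt hα
  have hx' : (x : ℂ) ≠ 0 := ofReal_ne_zero.mpr hx.ne'
  have hz : ‖α / x‖ < 1 := by
    rwa [norm_div, norm_real, Real.norm_of_nonneg hx.le, div_lt_one hx]
  have hfactor : (x + α : ℂ) ^ a = (x : ℂ) ^ a * (1 + α / x) ^ a := by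
    rw [← ofReal_mul_cpow hx, mul_add, mul_one, mul_div_cancel₀ _ hx']
  have hterm (j : ℕ) : Ring.choose a j * α ^ j * (x : ℂ) ^ (a - j) =
      (x : ℂ) ^ a * (Ring.choose a j * (α / x) ^ j) := by
    rw [mul_assoc, pow_mul_cpow_sub_natCast hx', mul_left_comm]
  simpa only [hterm, hfactor] using (hasSum_choose_mul_pow a hz).mul_left ((x : ℂ) ^ a)

theorem summable_choose_mul_pow_mul_natCast_add_cpow {c : ℝ} {α a : ℂ} (hα : ‖α‖ < c)
    (ha : a.re < -1) :
    Summable fun p : ℕ × ℕ =>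
      Ring.choose a p.2 * α ^ p.2 * ((p.1 : ℂ) + c) ^ (a - p.2) := by
  have hc : 0 < c := (norm_nonneg α).trans_lt hα
  have hr : ‖α‖ / c < 1 := (div_lt_one hc).mpr hα
  refine Summable.of_norm_bounded ((Real.summable_natCast_add_rpow hc.le ha).mul_of_nonneg
    (summable_norm_choose_mul_pow a (by positivity) hr) (fun _ => by positivity)
    (fun _ => by positivity)) ?_
  rintro ⟨n, j⟩
  have hx : 0 < (n : ℝ) + c := by positivity
  have hx' : ((n : ℂ) + c) = (((n : ℝ) + c : ℝ) : ℂ) := by push_cast; rfl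
  rw [hx', mul_assoc, pow_mul_cpow_sub_natCast (ofReal_ne_zero.mpr hx.ne'), norm_mul, norm_mul,
    norm_pow, norm_div, norm_cpow_eq_rpow_re_of_pos hx, norm_real, Real.norm_of_nonneg hx.le,
    mul_left_comm]
  gcongr
  linarith [n.cast_nonneg (α := ℝ)]

theorem hasSum_choose_mul_pow_mul_tsum_natCast_add_cpow {c : ℝ} {α a : ℂ} (hα : ‖α‖ < c)
    (ha : a.re < -1) :
    HasSum (fun j : ℕ => Ring.choose a j * α ^ j * ∑' n : ℕ, ((n : ℂ) + c) ^ (a - j))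
      (∑' n : ℕ, ((n : ℂ) + c + α) ^ a) := by
  have hF := summable_choose_mul_pow_mul_natCast_add_cpow hα ha
  have hrows : HasSum (fun n : ℕ => ((n : ℂ) + c + α) ^ a) _ :=
    hF.hasSum.prod_fiberwise fun n => by
      have hn : ‖α‖ < (n : ℝ) + c := by linarith [n.cast_nonneg (α := ℝ)]
      simpa using hasSum_choose_mul_pow_mul_cpow_sub hn a
  rw [hrows.tsum_eq]
  refine ((Equiv.prodComm ℕ ℕ).hasSum_iff.mpr hF.hasSum).prod_fiberwise fun j => ?_
  rw [← tsum_mul_left]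
  exact (hF.prod_symm.prod_factor j).hasSum

end Complex

theorem hurwitz_series_expansion_shift_general (k : ℕ) (s α : ℂ) (hs : 1 < s.re)
    (hα : ‖α‖ < k) :
    ∑' n : ℕ, ((n : ℂ) + k + α) ^ (-s) =
      zetaShift k s +
        ∑' n : ℕ, ((-1) ^ (n + 1) / ((n + 1).factorial : ℂ)) *
          (∏ i ∈ Finset.range (n + 1), (s + i)) * zetaShift k (s + (n + 1)) * α ^ (n + 1) := by
  have hexp := Complex.hasSum_choose_mul_pow_mul_tsum_natCast_add_cpow (a := -s) hα
    (by simpa using hs)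
  simp only [ofReal_natCast] at hexp
  rw [← hexp.tsum_eq, hexp.summable.tsum_eq_zero_add]
  congr 1
  · simp [zetaShift]
  · refine tsum_congr fun j => ?_
    rw [Ring.choose_neg_eq_prod, zetaShift, neg_add', Nat.cast_succ]
    ring

/-- For an integer `k ≥ 1`, `Re s > 1` and `|α| < k`, the series `∑_{n≥k} (n+α)^{-s}` equals
`ζ_k(s) + ∑_{n≥1} ((-1)^n/n!) s(s+1)⋯(s+n-1) ζ_k(s+n) α^n`. -/
theorem hurwitz_series_expansion_shift (k : ℕ) (hk : 1 ≤ k) (s α : ℂ) (hs : 1 < s.re)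
    (hα : ‖α‖ < k) :
    ∑' n : ℕ, ((n : ℂ) + k + α) ^ (-s) =
      zetaShift k s +
        ∑' n : ℕ, ((-1) ^ (n + 1) / ((n + 1).factorial : ℂ)) *
          (∏ i ∈ Finset.range (n + 1), (s + i)) * zetaShift k (s + (n + 1)) * α ^ (n + 1) :=
  hurwitz_series_expansion_shift_general k s α hs hα
end

section
/- For every integer r ≥ 0 and every complex s with Re(s) > 1, the r-th partial derivative in s of ζ_1(s, α) = ∑_{n≥1} (n+α)^{-s} is, for |α| < 1, given by term-by-term differentiation of the power series in α: ∂^r/∂s^r ζ_1(s, α) = ζ^{(r)}(s) + ∑_{n≥1} ((-α)^n/n!) · (d^r/ds^r)[s(s+1)⋯(s+n-1) ζ(s+n)]. -/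
/-!
For `Re z > 1`, expanding `(m + 1 + α)^(-z) = (m + 1)^(-z) (1 + α/(m + 1))^(-z)` by the binomial
series and summing over `m` first gives
`ζ_1(z, α) = ∑_k ((-α)^k / k!) z(z+1)⋯(z+k-1) ζ(z+k)`.
The double series converges absolutely: its terms are dominated by
`(|α|^k / k!) |z|(|z|+1)⋯(|z|+k-1) (m+1)^(-Re z)`, and the sum over `k` of the first factor is
`(1 - |α|)^(-|z|)`. Near `s`, where `Re z` stays above some `σ > 1` and `|z|` stays bounded, the same
majorant (with `ζ(σ)` bounding `|ζ(z+k)|`) is uniform, so by Weierstrass' theorem the series of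
holomorphic functions may be differentiated termwise any number of times.
-/

open Complex Finset Filter Topology
open scoped Nat

theorem Complex.hasSum_pow_div_factorial_mul_prod_add {x : ℂ} (hx : ‖x‖ < 1) (z : ℂ) :
    HasSum (fun k : ℕ => x ^ k / k ! * ∏ i ∈ range k, (z + i)) ((1 - x) ^ (-z)) := by
  have hmem : -x ∈ Metric.eball (0 : ℂ) 1 := by
    simpa [edist_zero_right, ← ofReal_norm] using hx
  have hsum := (one_add_cpow_hasFPowerSeriesOnBall_zero (a := -z)).hasSum hmem
  rw [zero_add, ← sub_eq_add_neg] at hsum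
  refine hsum.congr_fun fun k => ?_
  have hprod : (∏ j ∈ range k, (-z - j)) * (-x) ^ k = x ^ k * ∏ i ∈ range k, (z + i) := by
    induction k with
    | zero => simp
    | succ k ih =>
      rw [prod_range_succ, prod_range_succ, pow_succ, pow_succ]
      linear_combination (-z - k) * (-x) * ih
  rw [binomialSeries_apply, Ring.choose_eq_smul, smul_eq_mul, List.ofFn_const, List.prod_replicate,
    smul_eq_mul, ← Polynomial.aeval_eq_smeval, ← Polynomial.eval_map_algebraMap, descPochhammer_map,
    descPochhammer_eval_eq_prod_range, mul_assoc, hprod]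
  ring

theorem Real.summable_pow_div_factorial_mul_prod_add {t : ℝ} (ht : |t| < 1) (R : ℝ) :
    Summable (fun k : ℕ => t ^ k / k ! * ∏ i ∈ range k, (R + i)) := by
  rw [← Complex.summable_ofReal]
  convert (Complex.hasSum_pow_div_factorial_mul_prod_add (x := t) (by simpa using ht) R).summable
  push_cast
  rfl

theorem Complex.ofReal_mul_cpow_s18 {r : ℝ} (hr : 0 < r) (x c : ℂ) :
    ((r : ℂ) * x) ^ c = (r : ℂ) ^ c * x ^ c := by
  rcases eq_or_ne x 0 with rfl | hx
  · rcases eq_or_ne c 0 with rfl | hc <;> simp [*]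
  have hr' : (r : ℂ) ≠ 0 := ofReal_ne_zero.mpr hr.ne'
  rw [cpow_def_of_ne_zero (mul_ne_zero hr' hx), cpow_def_of_ne_zero hr', cpow_def_of_ne_zero hx,
    ← Complex.exp_add, log_ofReal_mul hr hx, add_mul, ofReal_log hr.le]

lemma Complex.norm_natCast_add_one_cpow (m : ℕ) (w : ℂ) :
    ‖((m : ℂ) + 1) ^ w‖ = ((m : ℝ) + 1) ^ w.re := by
  simpa using norm_natCast_cpow_of_pos m.succ_pos w

lemma Complex.norm_prod_range_add_natCast_le (z : ℂ) (k : ℕ) :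
    ‖∏ i ∈ range k, (z + i)‖ ≤ ∏ i ∈ range k, (‖z‖ + i) := by
  rw [norm_prod]
  gcongr with i
  simpa using norm_add_le z i

theorem hasSum_ofReal_add_cpow_neg {a : ℝ} (ha : 0 < a) {α : ℂ} (hα : ‖α‖ < a) (z : ℂ) :
    HasSum (fun k : ℕ => (-α) ^ k / k ! * ((∏ i ∈ range k, (z + i)) / (a : ℂ) ^ (z + k)))
      ((a + α) ^ (-z)) := by
  have ha' : (a : ℂ) ≠ 0 := ofReal_ne_zero.mpr ha.ne'
  have hx : ‖-α / a‖ < 1 := by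
    rwa [norm_div, norm_neg, norm_real, Real.norm_of_nonneg ha.le, div_lt_one ha]
  have hsplit : (a : ℂ) + α = a * (1 - -α / a) := by field_simp; ring
  rw [hsplit, ofReal_mul_cpow_s18 ha]
  refine ((Complex.hasSum_pow_div_factorial_mul_prod_add hx z).mul_left _).congr_fun fun k => ?_
  rw [cpow_add _ _ ha', cpow_natCast, cpow_neg, div_pow]
  field_simp

lemma hasSum_one_div_nat_add_one_cpow {w : ℂ} (hw : 1 < w.re) :
    HasSum (fun m : ℕ => 1 / ((m : ℂ) + 1) ^ w) (riemannZeta w) := by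
  rw [zeta_eq_tsum_one_div_nat_add_one_cpow hw]
  refine Summable.hasSum ?_
  exact_mod_cast (summable_nat_add_iff 1).mpr (Complex.summable_one_div_nat_cpow.mpr hw)

lemma summable_one_div_nat_add_one_rpow {σ : ℝ} (hσ : 1 < σ) :
    Summable (fun m : ℕ => 1 / ((m : ℝ) + 1) ^ σ) := by
  simpa only [abs_of_pos (Nat.cast_add_one_pos (α := ℝ) _)] using
    (Real.summable_one_div_nat_add_rpow 1 σ).mpr hσ

theorem norm_riemannZeta_le_tsum {σ : ℝ} (hσ : 1 < σ) {w : ℂ} (hw : σ ≤ w.re) :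
    ‖riemannZeta w‖ ≤ ∑' m : ℕ, 1 / ((m : ℝ) + 1) ^ σ := by
  refine (hasSum_one_div_nat_add_one_cpow (hσ.trans_le hw)).norm_le_of_bounded
    (summable_one_div_nat_add_one_rpow hσ).hasSum fun m => ?_
  rw [norm_div, norm_one, Complex.norm_natCast_add_one_cpow]
  gcongr
  simp

noncomputable def hurwitzSeriesTerm (α : ℂ) (k : ℕ) (z : ℂ) : ℂ :=
  (-α) ^ k / k ! * ((∏ i ∈ range k, (z + i)) * riemannZeta (z + k))

theorem hasSum_hurwitzSeriesTerm {α z : ℂ} (hα : ‖α‖ < 1) (hz : 1 < z.re) :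
    HasSum (fun k => hurwitzSeriesTerm α k z) (∑' m : ℕ, ((m : ℂ) + 1 + α) ^ (-z)) := by
  set P : ℕ × ℕ → ℂ := fun p =>
    (-α) ^ p.1 / p.1 ! * ((∏ i ∈ range p.1, (z + i)) / ((p.2 : ℂ) + 1) ^ (z + p.1))
  have hzk (k : ℕ) : 1 < (z + k).re := by
    simpa using hz.trans_le (le_add_of_nonneg_right k.cast_nonneg)
  have hrow (m : ℕ) : HasSum (fun k => P (k, m)) (((m : ℂ) + 1 + α) ^ (-z)) := by
    have hm : ‖α‖ < (m : ℝ) + 1 := hα.trans_le (by simp)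
    simpa using hasSum_ofReal_add_cpow_neg (Nat.cast_add_one_pos m) hm z
  have hcol (k : ℕ) : HasSum (fun m => P (k, m)) (hurwitzSeriesTerm α k z) := by
    rw [hurwitzSeriesTerm, ← mul_assoc]
    refine ((hasSum_one_div_nat_add_one_cpow (hzk k)).mul_left _).congr_fun fun m => ?_
    simp only [P]
    ring
  have hP : Summable P := by
    refine .of_norm_bounded ((Real.summable_pow_div_factorial_mul_prod_add (t := ‖α‖)
      (by simpa using hα) ‖z‖).mul_of_nonneg (summable_one_div_nat_add_one_rpow hz)
      (fun k => by positivity) (fun m => by positivity)) fun ⟨k, m⟩ => ?_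
    simp only [P, norm_mul, norm_div, norm_pow, norm_neg, Complex.norm_natCast,
      Complex.norm_natCast_add_one_cpow, add_re, natCast_re]
    rw [mul_assoc, div_eq_mul_one_div ‖_‖]
    gcongr
    · exact Complex.norm_prod_range_add_natCast_le z k
    · simp
    · exact le_add_of_nonneg_right k.cast_nonneg
  have hswap : HasSum (P ∘ Equiv.prodComm ℕ ℕ) (∑' p, P p) :=
    (Equiv.prodComm ℕ ℕ).hasSum_iff.mpr hP.hasSum
  rw [(hswap.prod_fiberwise hrow).tsum_eq]
  exact hP.hasSum.prod_fiberwise hcol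

section Weierstrass

variable {ι E : Type*} [NormedAddCommGroup E] [NormedSpace ℂ E] [CompleteSpace E] {U : Set ℂ}

theorem TendstoLocallyUniformlyOn.iteratedDeriv {l : Filter ι} {F : ι → ℂ → E} {f : ℂ → E}
    (hf : TendstoLocallyUniformlyOn F f l U) (hF : ∀ᶠ n in l, DifferentiableOn ℂ (F n) U)
    (hU : IsOpen U) (r : ℕ) :
    TendstoLocallyUniformlyOn (fun n => iteratedDeriv r (F n)) (iteratedDeriv r f) l U := by
  induction r with
  | zero => simpa using hf
  | succ r ih =>
    simp only [iteratedDeriv_succ]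
    refine ih.deriv ?_ hU
    filter_upwards [hF] with n hn
    rw [iteratedDeriv_eq_iterate]
    exact ((hn.analyticOnNhd hU).iterated_deriv r).differentiableOn

theorem hasSum_iteratedDeriv_of_summable_norm {F : ι → ℂ → E} {u : ι → ℝ} {z : ℂ}
    (hu : Summable u) (hf : ∀ i, DifferentiableOn ℂ (F i) U) (hU : IsOpen U)
    (hF_le : ∀ i, ∀ w ∈ U, ‖F i w‖ ≤ u i) (r : ℕ) (hz : z ∈ U) :
    HasSum (fun i => iteratedDeriv r (F i) z) (iteratedDeriv r (fun w => ∑' i, F i w) z) := by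
  have hc := ((tendstoUniformlyOn_tsum hu hF_le).tendstoLocallyUniformlyOn.iteratedDeriv
    (.of_forall fun s => .fun_sum fun i _ => hf i) hU r).tendsto_at hz
  refine hc.congr fun s => ?_
  exact iteratedDeriv_fun_sum fun i _ => ((hf i).contDiffOn hU).contDiffAt (hU.mem_nhds hz)

end Weierstrass

theorem differentiableOn_hurwitzSeriesTerm (α : ℂ) (k : ℕ) :
    DifferentiableOn ℂ (hurwitzSeriesTerm α k) {z | 1 < z.re} := by
  intro z (hz : 1 < z.re)
  have hζ : z + k ≠ 1 := fun h => by
    have hre := congrArg re h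
    simp only [add_re, natCast_re, one_re] at hre
    linarith [(k.cast_nonneg : (0 : ℝ) ≤ k)]
  refine DifferentiableAt.differentiableWithinAt ?_
  exact (differentiableAt_const _).mul ((DifferentiableAt.fun_finsetProd fun i _ =>
    differentiableAt_id.add_const _).mul ((differentiableAt_riemannZeta hζ).comp z
      (differentiableAt_id.add_const _)))

theorem norm_hurwitzSeriesTerm_le (α : ℂ) (k : ℕ) {z : ℂ} {R σ : ℝ} (hσ : 1 < σ)
    (hzR : ‖z‖ ≤ R) (hzσ : σ ≤ z.re) :
    ‖hurwitzSeriesTerm α k z‖ ≤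
      ‖α‖ ^ k / k ! * (∏ i ∈ range k, (R + i)) * ∑' m : ℕ, 1 / ((m : ℝ) + 1) ^ σ := by
  rw [hurwitzSeriesTerm, norm_mul, norm_div, norm_pow, norm_neg, Complex.norm_natCast, norm_mul]
  have hprod : ‖∏ i ∈ range k, (z + i)‖ ≤ ∏ i ∈ range k, (R + i) :=
    (Complex.norm_prod_range_add_natCast_le z k).trans (by gcongr)
  have hζ : ‖riemannZeta (z + k)‖ ≤ ∑' m : ℕ, 1 / ((m : ℝ) + 1) ^ σ :=
    norm_riemannZeta_le_tsum hσ (by simpa using hzσ.trans (le_add_of_nonneg_right k.cast_nonneg))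
  rw [mul_assoc]
  exact mul_le_mul_of_nonneg_left
    (mul_le_mul hprod hζ (norm_nonneg _) ((norm_nonneg _).trans hprod)) (by positivity)

/-- For every `r ≥ 0`, `Re s > 1` and `|α| < 1`, the `r`-th `s`-derivative of
`ζ_1(s, α) = ∑_{n≥1} (n+α)^{-s}` is given by term-by-term `s`-differentiation of its power
series in `α`:
`∂^r/∂s^r ζ_1(s, α) = ζ^{(r)}(s) + ∑_{n≥1} ((-α)^n/n!) (d^r/ds^r)[s(s+1)⋯(s+n-1) ζ(s+n)]`. -/
theorem iteratedDeriv_hurwitz_series (r : ℕ) (s : ℂ) (hs : 1 < s.re) (α : ℂ) (hα : ‖α‖ < 1) :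
    iteratedDeriv r (fun z : ℂ => ∑' n : ℕ, ((n : ℂ) + 1 + α) ^ (-z)) s =
      iteratedDeriv r riemannZeta s +
        ∑' n : ℕ, ((-α) ^ (n + 1) / ((n + 1).factorial : ℂ)) *
          iteratedDeriv r
            (fun z : ℂ => (∏ i ∈ Finset.range (n + 1), (z + i)) * riemannZeta (z + (n + 1)))
            s := by
  obtain ⟨σ, hσ, hσs⟩ := exists_between hs
  set U := {w : ℂ | σ < w.re ∧ ‖w‖ < ‖s‖ + 1}
  have hU : IsOpen U :=
    (isOpen_lt continuous_const continuous_re).inter (isOpen_lt continuous_norm continuous_const)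
  have hsum := hasSum_iteratedDeriv_of_summable_norm
    ((Real.summable_pow_div_factorial_mul_prod_add (by rwa [abs_norm]) (‖s‖ + 1)).mul_right _)
    (fun k => (differentiableOn_hurwitzSeriesTerm α k).mono fun w hw => hσ.trans hw.1) hU
    (fun k w hw => norm_hurwitzSeriesTerm_le α k hσ hw.2.le hw.1.le) r ⟨hσs, lt_add_one _⟩
  have hζ₁ : (fun z => ∑' n : ℕ, ((n : ℂ) + 1 + α) ^ (-z)) =ᶠ[𝓝 s]
      fun z => ∑' k, hurwitzSeriesTerm α k z := by
    filter_upwards [(isOpen_lt continuous_const continuous_re).mem_nhds hs] with z hz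
    exact (hasSum_hurwitzSeriesTerm hα hz).tsum_eq.symm
  rw [hζ₁.iteratedDeriv_eq, ← hsum.tsum_eq, hsum.summable.tsum_eq_zero_add]
  congr 1
  · unfold hurwitzSeriesTerm
    simp
  · refine tsum_congr fun n => ?_
    unfold hurwitzSeriesTerm
    simp only [Nat.cast_add, Nat.cast_one, iteratedDeriv_const_mul_field]
end
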